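/- Every infinite virtually cyclic subgroup Q of Houghton's group H_n is finite-by-ℤ, i.e., Q has a finite normal subgroup F with Q/F ≅ ℤ; equivalently, no infinite virtually cyclic subgroup of H_n is finite-by-D_∞. -/

import Mathlib

/-- `h` is eventually the translation given by the integer vector `m`:
for each ray `x`, `h (i, x) = (i + m x, x)` for all `i ≥ z x`. -/
def EvTransW (n : ℕ) (h : ℕ × Fin n → ℕ × Fin n) (m : Fin n → ℤ) : Prop :=
  ∃ z : Fin n → ℕ, ∀ (x : Fin n) (i : ℕ), z x ≤ i →
    ((h (i, x)).1 : ℤ) = (i : ℤ) + m x ∧ (h (i, x)).2 = x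

/-- `h` is eventually a translation. -/
def EvTrans (n : ℕ) (h : ℕ × Fin n → ℕ × Fin n) : Prop :=
  ∃ m : Fin n → ℤ, EvTransW n h m

/-!
The eventual translations on the `n` rays give a homomorphism `Q → ℤⁿ` whose kernel consists of
finitely supported permutations, hence of elements of finite order. Since `Q` is infinite, a
generator `c` of the finite-index cyclic subgroup has infinite order, so some coordinate
`ψ : Q → ℤ` of this homomorphism is nonzero at `c`. Then `ker ψ` meets `⟨c⟩` trivially and is
therefore finite, and `ψ` corestricted to its image, an infinite cyclic group, is the required
surjection onto `ℤ`.
-/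

open Subgroup

theorem Equiv.Perm.isOfFinOrder_of_finite_support {α : Type*} {f : Equiv.Perm α}
    (hf : {x | f x ≠ x}.Finite) : IsOfFinOrder f := by
  classical
  have : Finite {x // f x ≠ x} := hf
  have hinv : ∀ x, f (f x) ≠ f x ↔ f x ≠ x := fun x => f.injective.ne_iff
  rw [← ofSubtype_subtypePerm hinv fun _ hx => hx]
  exact ofSubtype.isOfFinOrder (isOfFinOrder_of_finite _)

namespace EvTransW

variable {n : ℕ} {h g : ℕ × Fin n → ℕ × Fin n} {m m' : Fin n → ℤ}

theorem unique (hm : EvTransW n h m) (hm' : EvTransW n h m') : m = m' := by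
  obtain ⟨z, hz⟩ := hm
  obtain ⟨z', hz'⟩ := hm'
  funext x
  have := (hz x _ (le_max_left (z x) (z' x))).1
  have := (hz' x _ (le_max_right (z x) (z' x))).1
  omega

theorem comp (hm : EvTransW n h m) (hm' : EvTransW n g m') : EvTransW n (h ∘ g) (m + m') := by
  obtain ⟨z, hz⟩ := hm
  obtain ⟨z', hz'⟩ := hm'
  refine ⟨fun x => max (z' x) (z x + (m' x).natAbs), fun x i hi => ?_⟩
  obtain ⟨hg₁, hg₂⟩ := hz' x i (le_of_max_le_left hi)
  have hgi : g (i, x) = ((g (i, x)).1, x) := Prod.ext rfl hg₂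
  obtain ⟨hh₁, hh₂⟩ := hz x (g (i, x)).1 (by have := le_of_max_le_right hi; omega)
  rw [Function.comp_apply, hgi, hh₁, hg₁, Pi.add_apply]
  exact ⟨by ring, hh₂⟩

theorem finite_support_of_zero {q : Equiv.Perm (ℕ × Fin n)} (hq : EvTransW n q 0) :
    {p | q p ≠ p}.Finite := by
  obtain ⟨z, hz⟩ := hq
  refine ((Set.finite_Iio (Finset.univ.sup z)).prod Set.finite_univ).subset fun p hp => ?_
  refine ⟨Set.mem_Iio.mpr <| lt_of_lt_of_le (not_le.mp fun hle => hp ?_)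
    (Finset.le_sup (Finset.mem_univ p.2)), Set.mem_univ _⟩
  obtain ⟨h₁, h₂⟩ := hz p.2 p.1 hle
  exact Prod.ext (by simpa using h₁) h₂

end EvTransW

section Houghton

variable {n : ℕ} {Q : Subgroup (Equiv.Perm (ℕ × Fin n))}

noncomputable def translationHom (hQ : ∀ q ∈ Q, EvTrans n ⇑q) : Q →* Multiplicative (Fin n → ℤ) :=
  MonoidHom.mk' (fun q => .ofAdd (hQ q q.2).choose) fun q r =>
    (hQ _ (q * r).2).choose_spec.unique ((hQ q q.2).choose_spec.comp (hQ r r.2).choose_spec)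

theorem isOfFinOrder_of_translationHom_eq_one (hQ : ∀ q ∈ Q, EvTrans n ⇑q) {q : Q}
    (hq : translationHom hQ q = 1) : IsOfFinOrder q := by
  have h := (hQ q q.2).choose_spec
  rw [show (hQ q q.2).choose = 0 from congrArg Multiplicative.toAdd hq] at h
  exact Submonoid.isOfFinOrder_coe.mp
    (Equiv.Perm.isOfFinOrder_of_finite_support h.finite_support_of_zero)

theorem exists_monoidHom_int_apply_ne_one (hQ : ∀ q ∈ Q, EvTrans n ⇑q) {q : Q}
    (hq : ¬IsOfFinOrder q) :
    ∃ ψ : Q →* Multiplicative ℤ, ψ q ≠ 1 := by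
  obtain ⟨x, hx⟩ := Function.ne_iff.mp (mt (isOfFinOrder_of_translationHom_eq_one hQ) hq)
  exact ⟨(Pi.evalAddMonoidHom (fun _ => ℤ) x).toMultiplicative.comp (translationHom hQ), hx⟩

end Houghton

section IntQuotient

variable {G : Type*} [Group G]

theorem Subgroup.finite_of_inf_eq_bot {H K : Subgroup G} [K.FiniteIndex] (h : H ⊓ K = ⊥) :
    Finite H := by
  have hK : K.relIndex H ≠ 0 := FiniteIndex.index_ne_zero
  rw [← inf_relIndex_left, h, relIndex_bot_left] at hK
  exact Nat.finite_of_card_ne_zero hK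

theorem MonoidHom.ker_inf_zpowers_eq_bot {A : Type*} [Group A] [IsMulTorsionFree A] (ψ : G →* A)
    {c : G} (hc : ψ c ≠ 1) : ψ.ker ⊓ zpowers c = ⊥ := by
  refine eq_bot_iff.mpr fun x hx => ?_
  obtain ⟨hx, hxc⟩ := mem_inf.mp hx
  obtain ⟨k, rfl⟩ := mem_zpowers_iff.mp hxc
  rw [MonoidHom.mem_ker, map_zpow, IsMulTorsionFree.zpow_eq_one_iff_right hc] at hx
  rw [hx, zpow_zero]
  exact one_mem ⊥

theorem Subgroup.infinite_of_ne_bot_of_isMulTorsionFree [IsMulTorsionFree G] {H : Subgroup G}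
    (hH : H ≠ ⊥) : Infinite H := by
  obtain ⟨⟨a, ha⟩, ha1⟩ := ne_bot_iff_exists_ne_one.mp hH
  have : (zpowers a : Set G).Infinite :=
    infinite_zpowers.mpr (not_isOfFinOrder_of_isMulTorsionFree (by simpa using ha1))
  exact Set.infinite_coe_iff.mpr (this.mono (zpowers_le.mpr ha))

theorem MonoidHom.exists_surjective_ker_eq (ψ : G →* Multiplicative ℤ) (hψ : ψ ≠ 1) :
    ∃ φ : G →* Multiplicative ℤ, Function.Surjective φ ∧ φ.ker = ψ.ker := by
  have := infinite_of_ne_bot_of_isMulTorsionFree (mt ψ.range_eq_bot_iff.mp hψ)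
  refine ⟨intCyclicMulEquiv.symm.toMonoidHom.comp ψ.rangeRestrict, ?_, by simp⟩
  exact intCyclicMulEquiv.symm.surjective.comp ψ.rangeRestrict_surjective

theorem exists_surjective_int_finite_ker {c : G} [(zpowers c).FiniteIndex]
    (ψ : G →* Multiplicative ℤ) (hc : ψ c ≠ 1) :
    ∃ φ : G →* Multiplicative ℤ, Function.Surjective φ ∧ Finite φ.ker := by
  obtain ⟨φ, hφ, hker⟩ := ψ.exists_surjective_ker_eq fun h => hc (by simp [h])
  exact ⟨φ, hφ, hker ▸ finite_of_inf_eq_bot (ψ.ker_inf_zpowers_eq_bot hc)⟩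

end IntQuotient

/-- Every infinite virtually cyclic subgroup `Q` of Houghton's group `H_n` is
finite-by-`ℤ`: there is a surjection `Q → ℤ` with finite kernel, i.e. a finite
normal subgroup `F ⊴ Q` with `Q/F ≅ ℤ`. -/
theorem stmt_17 (n : ℕ) (Q : Subgroup (Equiv.Perm (ℕ × Fin n)))
    (hQ : ∀ q ∈ Q, EvTrans n ⇑q) (hinf : Infinite Q)
    (hvc : ∃ C : Subgroup Q, IsCyclic C ∧ C.FiniteIndex) :
    ∃ φ : Q →* Multiplicative ℤ, Function.Surjective φ ∧ Finite φ.ker := by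
  obtain ⟨C, hC, hCfin⟩ := hvc
  obtain ⟨c, rfl⟩ := C.isCyclic_iff_exists_zpowers_eq_top.mp hC
  have hc : ¬IsOfFinOrder c := by
    rw [← infinite_zpowers, ← Set.infinite_coe_iff, ← not_finite_iff_infinite]
    intro hfin
    have := (finite_iff_finite_and_finiteIndex _).mpr ⟨hfin, hCfin⟩
    exact not_finite Q
  obtain ⟨ψ, hψ⟩ := exists_monoidHom_int_apply_ne_one hQ hc
  exact exists_surjective_int_finite_ker ψ hψ
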